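/- Let λ, μ ∈ ℤ₂ with λ ≡ μ ≡ 1 (mod 4), λ ≠ 1, μ ≠ 1, and set α = v₂(λ − 1) ≥ 2, β = v₂(μ − 1) ≥ 2. Fix k ≥ 2 and let σ be the automorphism of (ℤ/2^kℤ)² given by (x, y) ↦ (λx, μy). For integers 0 ≤ i, j ≤ k − 2, the set S(i,j) of pairs (x, y) ∈ (ℤ/2^kℤ)² such that x has additive order exactly 2^{i+2} and y has additive order exactly 2^{j+2} is stable under σ; every orbit of ⟨σ⟩ contained in S(i,j) has cardinality 2^{ρ₂(i,j)} where ρ₂(i,j) = max(0, i − α + 2, j − β + 2), and the number of such orbits is 4·2^{ν₂(i,j)} where ν₂(i,j) = min(i + j, i + β − 2, j + α − 2) = i + j − ρ₂(i,j). -/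

import Mathlib

/-!
Multiplication by a unit `c` of `ZMod (2 ^ k)` preserves additive orders, and the orbit of an
element of additive order `2 ^ t` under `⟨c⟩` has the size of the multiplicative order of `c`
modulo `2 ^ t`. For `λ = 1 + 2 ^ α u` with `u` a unit and `α ≥ 2` that order is `2 ^ (t - α)`.
As `σ` acts coordinatewise, every orbit in `S(i,j)` has size
`lcm (2 ^ (i + 2 - α)) (2 ^ (j + 2 - β)) = 2 ^ ρ`, so there are
`|S(i,j)| / 2 ^ ρ = φ(2 ^ (i + 2)) φ(2 ^ (j + 2)) / 2 ^ ρ = 2 ^ (i + j + 2 - ρ)` of them.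
-/

open Function MulAction

theorem ZMod.mul_eq_zero_iff_cast_eq_zero {n d : ℕ} [NeZero n] {x : ZMod n}
    (hx : addOrderOf x = d) (c : ZMod n) : c * x = 0 ↔ (c.cast : ZMod d) = 0 := by
  rw [← ZMod.natCast_zmod_val c, ← nsmul_eq_mul, ← addOrderOf_dvd_iff_nsmul_eq_zero, hx,
    ZMod.natCast_zmod_val, ZMod.cast_eq_val, ZMod.natCast_eq_zero_iff]

theorem ZMod.card_addOrderOf_eq_totient {n d : ℕ} [NeZero n] (hd : d ∣ n) :
    Nat.card {x : ZMod n | addOrderOf x = d} = d.totient := by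
  classical
  rw [Nat.card_eq_fintype_card, ← Set.toFinset_card, Set.toFinset_ofPred,
    IsAddCyclic.card_addOrderOf_eq_totient (by rwa [ZMod.card])]

theorem addOrderOf_mul_of_isUnit {R : Type*} [Semiring R] {c : R} (hc : IsUnit c) (x : R) :
    addOrderOf (c * x) = addOrderOf x :=
  addOrderOf_injective (AddMonoidHom.mulLeft c) hc.mul_right_injective x

theorem Nat.lcm_pow_pow (p a b : ℕ) : Nat.lcm (p ^ a) (p ^ b) = p ^ max a b := by
  rcases le_total a b with h | h
  · rw [max_eq_right h, Nat.lcm_eq_right (pow_dvd_pow p h)]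
  · rw [max_eq_left h, Nat.lcm_eq_left (pow_dvd_pow p h)]

theorem Equiv.Perm.mapsTo_of_mem_zpowers {α : Type*} [Finite α] {σ : Perm α} {S : Set α}
    (h : Set.MapsTo σ S S) {g : Perm α} (hg : g ∈ Subgroup.zpowers σ) : Set.MapsTo g S S := by
  obtain ⟨n, rfl⟩ := mem_powers_iff_mem_zpowers.mpr hg
  rw [coe_pow]
  exact h.iterate n

theorem MulAction.card_orbits_meeting_mul_eq_card {G α : Type*} [Group G] [MulAction G α]
    {S : Set α} [Finite S] (hS : ∀ g : G, ∀ a ∈ S, g • a ∈ S) {m : ℕ}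
    (horb : ∀ a ∈ S, Nat.card (orbit G a) = m) :
    Nat.card {ω : orbitRel.Quotient G α // ∃ a ∈ S, Quotient.mk (orbitRel G α) a = ω} * m
      = Nat.card S := by
  set T := {ω : orbitRel.Quotient G α // ∃ a ∈ S, Quotient.mk (orbitRel G α) a = ω}
  let f : S → T := fun a ↦ ⟨Quotient.mk _ a, a, a.2, rfl⟩
  have hf : Surjective f := by rintro ⟨_, a, ha, rfl⟩; exact ⟨⟨a, ha⟩, rfl⟩
  have hfiber : ∀ t, Nat.card {a // f a = t} = m := by
    rintro ⟨_, q, hq, rfl⟩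
    rw [← horb q hq]
    refine Nat.card_congr ((Equiv.subtypeEquivRight fun a ↦ ?_).trans
      (Equiv.subtypeSubtypeEquivSubtype fun {a} ha ↦ ?_))
    · exact Subtype.ext_iff.trans (Quotient.eq.trans orbitRel_apply)
    · obtain ⟨g, rfl⟩ := ha
      exact hS g q hq
  have : Fintype T := @Fintype.ofFinite _ (Finite.of_surjective f hf)
  rw [Nat.card_congr (Equiv.sigmaFiberEquiv f).symm, Nat.card_sigma]
  simp [hfiber, Nat.card_eq_fintype_card]

namespace PadicInt

variable {p : ℕ} [hp : Fact p.Prime]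

theorem toZModPow_eq_zero_iff_le_valuation {x : ℤ_[p]} (hx : x ≠ 0) (n : ℕ) :
    toZModPow n x = 0 ↔ n ≤ x.valuation := by
  rw [← RingHom.mem_ker, ker_toZModPow, mem_span_pow_iff_le_valuation x hx]

theorem toZModPow_mul_eq_self_iff {k t : ℕ} (ht : t ≤ k) (z : ℤ_[p]) {x : ZMod (p ^ k)}
    (hx : addOrderOf x = p ^ t) : toZModPow k z * x = x ↔ toZModPow t z = 1 := by
  rw [← sub_eq_zero, ← sub_one_mul, ZMod.mul_eq_zero_iff_cast_eq_zero hx, ← map_one (toZModPow k),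
    ← map_sub, cast_toZModPow t k ht, map_sub, map_one, sub_eq_zero]

theorem minimalPeriod_toZModPow_mul {k t : ℕ} (ht : t ≤ k) (z : ℤ_[p]) {x : ZMod (p ^ k)}
    (hx : addOrderOf x = p ^ t) :
    minimalPeriod (toZModPow k z * ·) x = orderOf (toZModPow t z) := by
  refine Nat.dvd_right_iff_eq.mp fun n ↦ ?_
  rw [← isPeriodicPt_iff_minimalPeriod_dvd, orderOf_dvd_iff_pow_eq_one, IsPeriodicPt, IsFixedPt,
    mul_left_iterate_apply, ← map_pow, toZModPow_mul_eq_self_iff ht _ hx, map_pow]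

theorem orderOf_toZModPow {lam : ℤ_[p]}
    (hv : (lam - 1).valuation + 2 ≤ p * (lam - 1).valuation) (t : ℕ) :
    orderOf (toZModPow t lam) = p ^ (t - (lam - 1).valuation) := by
  set α := (lam - 1).valuation with hα
  have hα0 : α ≠ 0 := by rintro h; rw [h] at hv; omega
  have hne : lam - 1 ≠ 0 := by rintro h; rw [h, valuation_zero] at hα; exact hα0 hα
  rcases le_or_gt t α with htα | hαt
  · have h1 : toZModPow t lam = 1 := by
      rw [← sub_eq_zero, ← map_one (toZModPow t), ← map_sub,
        toZModPow_eq_zero_iff_le_valuation hne]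
      exact htα
    rw [h1, orderOf_one, Nat.sub_eq_zero_of_le htα, pow_zero]
  obtain ⟨n, rfl⟩ : ∃ n, t = n + α := ⟨t - α, by omega⟩
  set u := (unitCoeff hne : ℤ_[p])
  obtain ⟨a, ha⟩ := ZMod.intCast_surjective (toZModPow (n + α) u)
  have hlam : toZModPow (n + α) lam = 1 + p ^ α * a := by
    rw [ha, show lam = 1 + u * (p : ℤ_[p]) ^ α by rw [hα, ← unitCoeff_spec hne]; ring]
    simp [mul_comm]
  have hpa : ¬ (p : ℤ) ∣ a := by
    have hu : IsUnit (toZModPow (n + α) u) := (unitCoeff hne).isUnit.map _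
    rw [← ha] at hu
    rw [← ZMod.intCast_zmod_eq_zero_iff_dvd]
    simpa using (hu.map (ZMod.castHom (dvd_pow_self p (by omega)) (ZMod p))).ne_zero
  rw [hlam, Nat.add_sub_cancel]
  exact ZMod.orderOf_one_add_mul_prime_pow hp.out α hα0 hv a hpa n

theorem two_le_valuation_sub_one {lam : ℤ_[2]} (h4 : (4 : ℤ_[2]) ∣ lam - 1) (hne : lam ≠ 1) :
    2 ≤ (lam - 1).valuation := by
  rw [← toZModPow_eq_zero_iff_le_valuation (sub_ne_zero.mpr hne), ← RingHom.mem_ker,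
    ker_toZModPow, Ideal.mem_span_singleton]
  norm_num [h4]

end PadicInt

open PadicInt

/-- Let `λ, μ ∈ ℤ₂` with `λ ≡ μ ≡ 1 (mod 4)`, `λ ≠ 1`, `μ ≠ 1`,
`α = v₂(λ-1) ≥ 2`, `β = v₂(μ-1) ≥ 2`.  Fix `k ≥ 2` and let `σ` be the automorphism
`(x, y) ↦ (λx, μy)` of `(ℤ/2^kℤ)²`.  For `0 ≤ i, j ≤ k-2`, the set `S(i,j)` of pairs whose
coordinates have additive orders exactly `2^(i+2)` and `2^(j+2)` is stable under `σ`; each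
orbit of `⟨σ⟩` inside `S(i,j)` has cardinality `2^ρ₂(i,j)` with
`ρ₂(i,j) = max(0, i-α+2, j-β+2)`, and the number of such orbits is `4·2^ν₂(i,j)` with
`ν₂(i,j) = min(i+j, i+β-2, j+α-2) = i+j-ρ₂(i,j)`. -/
theorem stmt12 (lam mu : ℤ_[2])
    (hlam : (4 : ℤ_[2]) ∣ (lam - 1)) (hmu : (4 : ℤ_[2]) ∣ (mu - 1))
    (hlne : lam ≠ 1) (hmne : mu ≠ 1)
    (α β : ℕ) (hα : α = (lam - 1).valuation) (hβ : β = (mu - 1).valuation)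
    (k : ℕ) (hk : 2 ≤ k)
    (σ : Equiv.Perm (ZMod (2 ^ k) × ZMod (2 ^ k)))
    (hσ : ∀ p : ZMod (2 ^ k) × ZMod (2 ^ k),
      σ p = (PadicInt.toZModPow k lam * p.1, PadicInt.toZModPow k mu * p.2))
    (i j : ℕ) (hi : i ≤ k - 2) (hj : j ≤ k - 2)
    (S : Set (ZMod (2 ^ k) × ZMod (2 ^ k)))
    (hS : S = {p | addOrderOf p.1 = 2 ^ (i + 2) ∧ addOrderOf p.2 = 2 ^ (j + 2)})
    (ρ ν : ℕ) (hρ : ρ = max 0 (max ((i + 2) - α) ((j + 2) - β)))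
    (hν : ν = min (i + j) (min (i + β - 2) (j + α - 2))) :
    (∀ p ∈ S, σ p ∈ S)
    ∧ (∀ p ∈ S, Nat.card (MulAction.orbit (Subgroup.zpowers σ) p) = 2 ^ ρ)
    ∧ Nat.card {ω : MulAction.orbitRel.Quotient (Subgroup.zpowers σ)
          (ZMod (2 ^ k) × ZMod (2 ^ k)) //
        ∃ p ∈ S, Quotient.mk (MulAction.orbitRel (Subgroup.zpowers σ) _) p = ω}
        = 4 * 2 ^ ν
    ∧ ν = i + j - ρ := by
  have hα2 : 2 ≤ α := hα ▸ two_le_valuation_sub_one hlam hlne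
  have hβ2 : 2 ≤ β := hβ ▸ two_le_valuation_sub_one hmu hmne
  have hord_lam (t : ℕ) : orderOf (toZModPow t lam) = 2 ^ (t - α) :=
    hα ▸ orderOf_toZModPow (by omega) t
  have hord_mu (t : ℕ) : orderOf (toZModPow t mu) = 2 ^ (t - β) :=
    hβ ▸ orderOf_toZModPow (by omega) t
  have hunit_lam : IsUnit (toZModPow k lam) :=
    (orderOf_pos_iff.mp (hord_lam k ▸ by positivity)).isUnit
  have hunit_mu : IsUnit (toZModPow k mu) :=
    (orderOf_pos_iff.mp (hord_mu k ▸ by positivity)).isUnit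
  have hstab : Set.MapsTo σ S S := by
    intro p hp
    rw [hS] at hp ⊢
    rw [hσ, Set.mem_ofPred, addOrderOf_mul_of_isUnit hunit_lam, addOrderOf_mul_of_isUnit hunit_mu]
    exact hp
  have hperiod : ∀ p ∈ S, minimalPeriod σ p = 2 ^ ρ := by
    intro p hp
    rw [hS] at hp
    rw [show ⇑σ = Prod.map _ _ from funext hσ, minimalPeriod_prodMap,
      minimalPeriod_toZModPow_mul (by omega) _ hp.1, minimalPeriod_toZModPow_mul (by omega) _ hp.2,
      hord_lam, hord_mu, Nat.lcm_pow_pow, hρ, max_eq_right (Nat.zero_le _)]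
  have horb : ∀ p ∈ S, Nat.card (orbit (Subgroup.zpowers σ) p) = 2 ^ ρ := by
    classical
    intro p hp
    rw [Nat.card_eq_fintype_card, ← minimalPeriod_eq_card]
    exact hperiod p hp
  have hcardS : Nat.card S = 2 ^ (i + 1) * 2 ^ (j + 1) := by
    have hprod : S = {x | addOrderOf x = 2 ^ (i + 2)} ×ˢ {y | addOrderOf y = 2 ^ (j + 2)} := hS
    rw [hprod, Nat.card_congr (Equiv.Set.prod _ _), Nat.card_prod,
      ZMod.card_addOrderOf_eq_totient (pow_dvd_pow 2 (by omega)),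
      ZMod.card_addOrderOf_eq_totient (pow_dvd_pow 2 (by omega)),
      Nat.totient_prime_pow_succ Nat.prime_two, Nat.totient_prime_pow_succ Nat.prime_two]
    simp
  refine ⟨hstab, horb, ?_, by omega⟩
  have hcount := card_orbits_meeting_mul_eq_card
    (fun g p hp ↦ Equiv.Perm.mapsTo_of_mem_zpowers hstab g.2 hp) horb
  rw [hcardS, ← pow_add, show i + 1 + (j + 1) = 2 + ν + ρ by omega, pow_add, pow_add] at hcount
  exact Nat.eq_of_mul_eq_mul_right (by positivity) hcount
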